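/- arXiv:2311.17803 — 2 statements merged into one kernel-verified Lean document; each statement's English description precedes it below -/
import Mathlib

section
/- Let Sk(v) be an indecomposable admissible component of the root groupoid. If the C-linear span of pi_S has nonempty intersection with Delta_is, then the C-linear span of pi_S equals the C-linear span of Sigma_v. -/
open scoped ComplexOrder

attribute [local instance] Classical.propDecidable

namespace KMS

noncomputable section

variable (X : Type*) [Fintype X] (H : Type*) [AddCommGroup H] [Module ℂ H]

/-- A root datum: maps `a : X → h`, `b : X → h*`, parity `p`, with `a`, `b`
linearly independent families (the "injectivity" of the induced maps from the span of `X`). -/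
structure RootDatum where
  a : X → H
  b : X → Module.Dual ℂ H
  p : X → ZMod 2
  lin_indep_a : LinearIndependent ℂ a
  lin_indep_b : LinearIndependent ℂ b

variable {X H}

/-- The Cartan matrix entry `a^v_{xy} = ⟨a_v(x), b_v(y)⟩`. -/
def cartan (v : RootDatum X H) (x y : X) : ℂ := v.b y (v.a x)

/-- `x` is reflectable at `v`. -/
def Reflectable (v : RootDatum X H) (x : X) : Prop :=
  (cartan v x x = 0 ∧ v.p x = 1) ∨
  (cartan v x x ≠ 0 ∧ v.p x = 0 ∧
    ∀ y, y ≠ x → ∃ n : ℕ, 2 * cartan v x y / cartan v x x = -(n : ℂ)) ∨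
  (cartan v x x ≠ 0 ∧ v.p x = 1 ∧
    ∀ y, y ≠ x → ∃ n : ℕ, cartan v x y / cartan v x x = -(n : ℂ))

/-- The anisotropic reflexion `r_x : v → v'`. -/
def IsAnisoReflexion (x : X) (v v' : RootDatum X H) : Prop :=
  Reflectable v x ∧ cartan v x x ≠ 0 ∧ v'.p = v.p ∧
  (∀ y, v'.a y = v.a y - (2 * cartan v y x / cartan v x x) • v.a x) ∧
  (∀ y, v'.b y = v.b y - (2 * cartan v x y / cartan v x x) • v.b x)

/-- The isotropic reflexion `r_x : v → v'`. -/
def IsIsoReflexion (x : X) (v v' : RootDatum X H) : Prop :=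
  Reflectable v x ∧ cartan v x x = 0 ∧
  v'.a x = -v.a x ∧ v'.b x = -v.b x ∧ v'.p x = v.p x ∧
  ∀ y, y ≠ x →
    (cartan v x y = 0 → v'.a y = v.a y ∧ v'.b y = v.b y ∧ v'.p y = v.p y) ∧
    (cartan v x y ≠ 0 →
      v'.a y = v.a y + (cartan v y x / cartan v x y) • v.a x ∧
      v'.b y = v.b y + v.b x ∧ v'.p y = v.p y + 1)

/-- A reflexion is either anisotropic or isotropic. -/
def IsReflexion (x : X) (v v' : RootDatum X H) : Prop :=
  IsAnisoReflexion x v v' ∨ IsIsoReflexion x v v'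

/-- A path of reflexions from `v` to `u`, recorded by the ordered list of its marks. -/
inductive IsPath : RootDatum X H → List X → RootDatum X H → Prop
  | nil (v : RootDatum X H) : IsPath v [] v
  | cons {v v' u : RootDatum X H} {x : X} {ms : List X} :
      IsReflexion x v v' → IsPath v' ms u → IsPath v (x :: ms) u

/-- A path of isotropic reflexions from `v` to `u`. -/
inductive IsIsoPath : RootDatum X H → List X → RootDatum X H → Prop
  | nil (v : RootDatum X H) : IsIsoPath v [] v
  | cons {v v' u : RootDatum X H} {x : X} {ms : List X} :
      IsIsoReflexion x v v' → IsIsoPath v' ms u → IsIsoPath v (x :: ms) u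

/-- The skeleton `Sk(v)`. -/
def Skeleton (v : RootDatum X H) : Set (RootDatum X H) := {u | ∃ ms : List X, IsPath v ms u}

/-- The spine `Sp(v)`. -/
def Spine (v : RootDatum X H) : Set (RootDatum X H) := {u | ∃ ms : List X, IsIsoPath v ms u}

/-- Admissibility of the component of `v`. -/
def Admissible (v : RootDatum X H) : Prop :=
  ∀ u ∈ Skeleton v, ∀ x, Reflectable u x → ∀ y, cartan u x y = 0 → cartan u y x = 0

/-- Full reflectability of the component of `v`. -/
def FullyReflectable (v : RootDatum X H) : Prop :=
  ∀ u ∈ Skeleton v, ∀ x, Reflectable u x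

/-- Anisotropic real roots. -/
def DeltaAn (v : RootDatum X H) : Set (Module.Dual ℂ H) :=
  {α | ∃ u x, u ∈ Skeleton v ∧ Reflectable u x ∧ cartan u x x ≠ 0 ∧ u.b x = α}

/-- Isotropic real roots. -/
def DeltaIs (v : RootDatum X H) : Set (Module.Dual ℂ H) :=
  {α | ∃ u x, u ∈ Skeleton v ∧ Reflectable u x ∧ cartan u x x = 0 ∧ u.b x = α}

/-- The coroot `α^∨ = (2 / a^u_{xx}) a_u(x)` of an anisotropic real root
(independent of the choice of presentation). -/
def coroot (v : RootDatum X H) (α : Module.Dual ℂ H) : H :=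
  if h : ∃ u x, u ∈ Skeleton v ∧ Reflectable u x ∧ cartan u x x ≠ 0 ∧ u.b x = α then
    (2 / cartan h.choose h.choose_spec.choose h.choose_spec.choose) •
      h.choose.a h.choose_spec.choose
  else 0

/-- The parity `p(α)` of an anisotropic real root. -/
def rootParity (v : RootDatum X H) (α : Module.Dual ℂ H) : ZMod 2 :=
  if h : ∃ u x, u ∈ Skeleton v ∧ Reflectable u x ∧ cartan u x x ≠ 0 ∧ u.b x = α then
    h.choose.p h.choose_spec.choose
  else 0

/-- Principal roots: anisotropic simple roots at vertices of the spine. -/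
def SigmaPr (v : RootDatum X H) : Set (Module.Dual ℂ H) :=
  {α | ∃ u x, u ∈ Spine v ∧ Reflectable u x ∧ cartan u x x ≠ 0 ∧ u.b x = α}

/-- The set `π`: even principal roots together with doubles of odd principal roots. -/
def piSet (v : RootDatum X H) : Set (Module.Dual ℂ H) :=
  {α | α ∈ SigmaPr v ∧ rootParity v α = 0} ∪
  {β | ∃ α ∈ SigmaPr v, rootParity v α = 1 ∧ β = (2 : ℂ) • α}

/-- The coroot of an element of `π` (with `(2α)^∨ = α^∨ / 2` for odd principal `α`). -/
def piCoroot (v : RootDatum X H) (β : Module.Dual ℂ H) : H :=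
  if β ∈ SigmaPr v then coroot v β else (2 : ℂ)⁻¹ • coroot v ((2 : ℂ)⁻¹ • β)

/-- The Weyl group: the subgroup of `GL(h^*)` generated by the reflections
`s_α : λ ↦ λ - ⟨α^∨, λ⟩ α` for `α ∈ Δ_an`. -/
def WeylGroup (v : RootDatum X H) :
    Subgroup (Module.Dual ℂ H ≃ₗ[ℂ] Module.Dual ℂ H) :=
  Subgroup.closure
    {w | ∃ α ∈ DeltaAn v, ∀ lam : Module.Dual ℂ H, w lam = lam - lam (coroot v α) • α}

/-- `Q^+_u`: nonnegative integral combinations of the simple roots at `u`. -/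
def QPlus (u : RootDatum X H) : Set (Module.Dual ℂ H) :=
  {μ | ∃ k : X → ℕ, μ = ∑ x, (k x : ℂ) • u.b x}

/-- `Q_u`: integral combinations of the simple roots at `u`. -/
def QLattice (u : RootDatum X H) : Set (Module.Dual ℂ H) :=
  {μ | ∃ k : X → ℤ, μ = ∑ x, (k x : ℂ) • u.b x}

/-- The convex cone of finite nonnegative real combinations of elements of `S`. -/
def coneR {M : Type*} [AddCommGroup M] [Module ℝ M] (S : Set M) : Set M :=
  {μ | ∃ (T : Finset M) (c : M → ℝ), ↑T ⊆ S ∧ (∀ m, 0 ≤ c m) ∧ μ = ∑ m ∈ T, c m • m}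

/-- The totally positive cone `Q^{++}_ℝ`. -/
def QppR (v : RootDatum X H) : Set (Module.Dual ℂ H) :=
  ⋂ u ∈ Skeleton v, coneR (Set.range u.b)

/-- Indecomposability of a square matrix. -/
def IsIndecMatrix {Y : Type*} [Fintype Y] (A : Y → Y → ℂ) : Prop :=
  Fintype.card Y = 1 ∨
  ∃ (s : ℕ) (e : Fin s ≃ Y), ∀ j : Fin s,
    A (e j) (e ⟨(j.1 + 1) % s, Nat.mod_lt _ j.pos⟩) ≠ 0

/-- Indecomposability of the component of `v`. -/
def IndecComp (v : RootDatum X H) : Prop :=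
  ∀ u ∈ Spine v, IsIndecMatrix (cartan u)

/-- The Cartan matrix at `v` as a matrix. -/
def cartanMatrix (v : RootDatum X H) : Matrix X X ℂ := Matrix.of fun x y => cartan v x y

/-- A Kac-Moody component: fully reflectable, admissible and `dim h = |X| + corank A^v`. -/
def IsKacMoodyComp (v : RootDatum X H) : Prop :=
  FullyReflectable v ∧ Admissible v ∧
  Module.finrank ℂ H = Fintype.card X + (Fintype.card X - (cartanMatrix v).rank)

/-- Type (Aff): the real span of `Q^{++}_ℝ` is one-dimensional. -/
def TypeAff (v : RootDatum X H) : Prop :=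
  Module.finrank ℝ (Submodule.span ℝ (QppR v)) = 1

/-- The set `π_S` of `S`-principal elements. -/
def piS (v : RootDatum X H) : Set (Module.Dual ℂ H) :=
  {α | ∃ u x, u ∈ Spine v ∧
    ((u.p x = 0 ∧ α = u.b x) ∨ (u.p x = 1 ∧ cartan u x x ≠ 0 ∧ α = (2 : ℂ) • u.b x))}

/-- `D`-equivalence of Cartan data. -/
def DEquivTo (u v : RootDatum X H) : Prop :=
  u.p = v.p ∧ ∃ D : X → ℂ, (∀ x, D x ≠ 0) ∧ ∀ x y, cartan u x y = D x * cartan v x y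

/-- `Sk^D(v)`. -/
def SkD (v : RootDatum X H) : Set (RootDatum X H) := {u | u ∈ Skeleton v ∧ DEquivTo u v}

/-- `Sp^D(v)`. -/
def SpD (v : RootDatum X H) : Set (RootDatum X H) := {u | u ∈ Spine v ∧ DEquivTo u v}

/-- `StarRel v u₁ u₂ u₃` says `u₁ * u₂ = u₃`, i.e. `σ^{u₁}(u₂) = u₃`: some path from `v`
ends at `u₂` and its namesake path from `u₁` ends at `u₃`. -/
def StarRel (v u₁ u₂ u₃ : RootDatum X H) : Prop :=
  ∃ ms : List X, IsPath v ms u₂ ∧ IsPath u₁ ms u₃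

/-- `u` is the vertex `w·v` for `w` in the Weyl group. -/
def VertexOf (v : RootDatum X H) (w : Module.Dual ℂ H ≃ₗ[ℂ] Module.Dual ℂ H)
    (u : RootDatum X H) : Prop :=
  u ∈ Skeleton v ∧ ∀ x, u.b x = w (v.b x)

end

end KMS

/-!
Every vertex of the skeleton is the image of a vertex `u₀` of the spine under a linear map
that preserves `span π_S` and keeps the Cartan matrix and the parities, so the given
isotropic real root yields an odd isotropic simple root at `u₀` lying in `span π_S`.
At a vertex of the spine all other simple roots lie in `span π_S` by definition, and
membership spreads from one odd isotropic simple root along the Cartan graph, which is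
connected: for the last edge `k — z` of a shortest path to an odd isotropic `z`, reflect
at `z`; then `b k + b z` is a simple root, in `span π_S` either because it is not odd
isotropic, or by induction since the rest of the path does not see the reflexion
(admissibility makes `a_{zk} ≠ 0`). The span of the simple roots is constant along the spine.
-/

theorem LinearIndependent.add_smul_of_eq_neg_two {ι R M : Type*} [CommRing R] [AddCommGroup M]
    [Module R M] {f : ι → M} (hf : LinearIndependent R f) {c : ι → R} {i : ι} (hc : c i = -2) :
    LinearIndependent R (fun j => f j + c j • f i) := by
  classical
  -- Flipping the sign of `f i` turns the family into `g + (c' · • g i)` with `c' i = 0`.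
  set g : ι → M := fun j => (Function.update (1 : ι → Rˣ) i (-1) j : R) • f j
  have hg : LinearIndependent R g := hf.units_smul _
  have hgi : g i = -f i := by simp [g]
  have key : (fun j => f j + c j • f i) = g + (fun j => (if j = i then 0 else -c j) • g i) := by
    funext j
    by_cases hj : j = i
    · subst hj
      simp only [Pi.add_apply, if_pos, zero_smul, add_zero, hgi, hc]
      module
    · simp [g, hj, hgi]
  rw [key]
  exact (linearIndependent_add_smul_iff (by simp)).2 hg

theorem Submodule.span_range_add_smul_of_eq_neg_two {ι R M : Type*} [CommRing R]
    [AddCommGroup M] [Module R M] (f : ι → M) {c : ι → R} {i : ι} (hc : c i = -2) :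
    span R (Set.range fun j => f j + c j • f i) = span R (Set.range f) := by
  have hle : ∀ f : ι → M, span R (Set.range fun j => f j + c j • f i) ≤ span R (Set.range f) :=
    fun f => span_le.2 <| Set.range_subset_iff.2 fun j =>
      add_mem (subset_span ⟨j, rfl⟩) (smul_mem _ _ (subset_span ⟨i, rfl⟩))
  refine (hle f).antisymm ?_
  -- The transformation is an involution.
  have hinv : (fun j => (f j + c j • f i) + c j • (f i + c i • f i)) = f := by
    funext j
    rw [hc]
    module
  conv_lhs => rw [← hinv]
  exact hle _

namespace KMS

noncomputable section

variable {X : Type*} {H : Type*} [AddCommGroup H] [Module ℂ H]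

theorem IsIsoPath.append {v w u : RootDatum X H} {ms ns : List X}
    (h₁ : IsIsoPath v ms w) (h₂ : IsIsoPath w ns u) : IsIsoPath v (ms ++ ns) u := by
  induction h₁ with
  | nil => exact h₂
  | cons hr _ ih => exact .cons hr (ih h₂)

theorem IsIsoPath.isPath {v u : RootDatum X H} {ms : List X} (h : IsIsoPath v ms u) :
    IsPath v ms u := by
  induction h with
  | nil => exact .nil _
  | cons hr _ ih => exact .cons (Or.inr hr) ih

theorem self_mem_spine (v : RootDatum X H) : v ∈ Spine v := ⟨[], .nil v⟩

theorem spine_subset_skeleton (v : RootDatum X H) : Spine v ⊆ Skeleton v :=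
  fun _ ⟨ms, h⟩ => ⟨ms, h.isPath⟩

theorem mem_spine_of_isIsoReflexion {v u u' : RootDatum X H} {x : X} (hu : u ∈ Spine v)
    (h : IsIsoReflexion x u u') : u' ∈ Spine v :=
  let ⟨ms, hp⟩ := hu
  ⟨ms ++ [x], hp.append (.cons h (.nil u'))⟩

theorem RootDatum.ext {u u' : RootDatum X H} (ha : u.a = u'.a) (hb : u.b = u'.b)
    (hp : u.p = u'.p) : u = u' := by
  cases u
  cases u'
  simp_all

/-- Exactly these simple roots at a vertex of the spine may fail to lie in `span π_S`. -/
def IsOddIsotropic (u : RootDatum X H) (x : X) : Prop := u.p x = 1 ∧ cartan u x x = 0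

theorem isOddIsotropic_iff {u : RootDatum X H} {x : X} :
    IsOddIsotropic u x ↔ Reflectable u x ∧ cartan u x x = 0 := by
  refine ⟨fun h => ⟨Or.inl ⟨h.2, h.1⟩, h.2⟩, fun ⟨hr, hc⟩ => ⟨?_, hc⟩⟩
  rcases hr with ⟨_, h⟩ | ⟨h, _⟩ | ⟨h, _⟩
  exacts [h, absurd hc h, absurd hc h]

theorem IsOddIsotropic.of_cartan_eq {u u₀ : RootDatum X H} {x : X} (h : IsOddIsotropic u x)
    (hc : cartan u = cartan u₀) (hp : u.p = u₀.p) : IsOddIsotropic u₀ x := by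
  rwa [IsOddIsotropic, ← hc, ← hp]

/-- Coefficient of `a_u(x)` in `a_{r_x u}(y)`; for `a^u_{xy} = 0` it is `0` (division by zero). -/
def isoACoef (A : X → X → ℂ) (x y : X) : ℂ := if y = x then -2 else A y x / A x y

def isoBCoef (A : X → X → ℂ) (x y : X) : ℂ := if y = x then -2 else if A x y = 0 then 0 else 1

def isoParity (A : X → X → ℂ) (p : X → ZMod 2) (x y : X) : ZMod 2 :=
  if y = x ∨ A x y = 0 then p y else p y + 1

def isoReflect (u : RootDatum X H) (x : X) : RootDatum X H where
  a y := u.a y + isoACoef (cartan u) x y • u.a x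
  b y := u.b y + isoBCoef (cartan u) x y • u.b x
  p := isoParity (cartan u) u.p x
  lin_indep_a := u.lin_indep_a.add_smul_of_eq_neg_two (by simp [isoACoef])
  lin_indep_b := u.lin_indep_b.add_smul_of_eq_neg_two (by simp [isoBCoef])

theorem isoReflect_p (u : RootDatum X H) (x : X) :
    (isoReflect u x).p = isoParity (cartan u) u.p x := rfl

theorem isIsoReflexion_isoReflect {u : RootDatum X H} {x : X} (hx : IsOddIsotropic u x) :
    IsIsoReflexion x u (isoReflect u x) := by
  refine ⟨(isOddIsotropic_iff.1 hx).1, hx.2, ?_, ?_, by simp [isoReflect, isoParity], ?_⟩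
  · simp only [isoReflect, isoACoef, if_pos]; module
  · simp only [isoReflect, isoBCoef, if_pos]; module
  · intro y hy
    exact ⟨fun h => by simp [isoReflect, isoACoef, isoBCoef, isoParity, hy, h],
      fun h => by simp [isoReflect, isoACoef, isoBCoef, isoParity, hy, h]⟩

theorem IsIsoReflexion.eq_isoReflect {u u' : RootDatum X H} {x : X}
    (h : IsIsoReflexion x u u') : u' = isoReflect u x := by
  obtain ⟨-, -, hax, hbx, hpx, hy⟩ := h
  have key : ∀ y, u'.a y = (isoReflect u x).a y ∧ u'.b y = (isoReflect u x).b y ∧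
      u'.p y = (isoReflect u x).p y := by
    intro y
    by_cases hyx : y = x
    · subst hyx
      refine ⟨?_, ?_, by simp [isoReflect, isoParity, hpx]⟩ <;>
        simp only [isoReflect, isoACoef, isoBCoef, if_pos, hax, hbx] <;> module
    by_cases hc : cartan u x y = 0
    · obtain ⟨ha, hb, hp⟩ := (hy y hyx).1 hc
      simp [isoReflect, isoACoef, isoBCoef, isoParity, hyx, hc, ha, hb, hp]
    · obtain ⟨ha, hb, hp⟩ := (hy y hyx).2 hc
      simp [isoReflect, isoACoef, isoBCoef, isoParity, hyx, hc, ha, hb, hp]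
  exact RootDatum.ext (funext fun y => (key y).1) (funext fun y => (key y).2.1)
    (funext fun y => (key y).2.2)

theorem isoReflect_mem_spine {v u : RootDatum X H} {x : X} (hu : u ∈ Spine v)
    (hx : IsOddIsotropic u x) : isoReflect u x ∈ Spine v :=
  mem_spine_of_isIsoReflexion hu (isIsoReflexion_isoReflect hx)

theorem cartan_isoReflect (u : RootDatum X H) (x y z : X) :
    cartan (isoReflect u x) y z = cartan u y z + isoBCoef (cartan u) x z * cartan u y x
      + isoACoef (cartan u) x y * cartan u x z
      + isoACoef (cartan u) x y * isoBCoef (cartan u) x z * cartan u x x := by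
  simp only [cartan, isoReflect, map_add, map_smul, LinearMap.add_apply, LinearMap.smul_apply,
    smul_eq_mul]
  ring

theorem span_range_b_isoReflect (u : RootDatum X H) (x : X) :
    Submodule.span ℂ (Set.range (isoReflect u x).b) = Submodule.span ℂ (Set.range u.b) :=
  Submodule.span_range_add_smul_of_eq_neg_two u.b (by simp [isoBCoef])

theorem span_range_b_of_mem_spine {v u : RootDatum X H} (hu : u ∈ Spine v) :
    Submodule.span ℂ (Set.range u.b) = Submodule.span ℂ (Set.range v.b) := by
  obtain ⟨ms, hp⟩ := hu
  induction hp with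
  | nil => rfl
  | cons hr _ ih => rw [ih, hr.eq_isoReflect, span_range_b_isoReflect]

def CartanAdj (u : RootDatum X H) (y z : X) : Prop := cartan u y z ≠ 0 ∨ cartan u z y ≠ 0

section Neighbours

variable {u : RootDatum X H} {x y : X}

theorem isoReflect_b_of_cartan_ne_zero (hy : y ≠ x) (h : cartan u x y ≠ 0) :
    (isoReflect u x).b y = u.b y + u.b x := by
  simp [isoReflect, isoBCoef, hy, h]

theorem isoReflect_p_of_cartan_ne_zero (hy : y ≠ x) (h : cartan u x y ≠ 0) :
    (isoReflect u x).p y = u.p y + 1 := by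
  simp [isoReflect, isoParity, hy, h]

theorem isoReflect_b_of_not_cartanAdj (hy : y ≠ x) (h : ¬CartanAdj u y x) :
    (isoReflect u x).b y = u.b y := by
  simp_all [CartanAdj, isoReflect, isoBCoef]

theorem cartanAdj_isoReflect_iff (hy : y ≠ x) (h : ¬CartanAdj u y x) (z : X) :
    CartanAdj (isoReflect u x) y z ↔ CartanAdj u y z := by
  simp_all [CartanAdj, cartan_isoReflect, isoACoef, isoBCoef]

theorem isOddIsotropic_isoReflect_iff (hy : y ≠ x) (h : ¬CartanAdj u y x) :
    IsOddIsotropic (isoReflect u x) y ↔ IsOddIsotropic u y := by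
  simp_all [CartanAdj, IsOddIsotropic, cartan_isoReflect, isoReflect_p, isoACoef, isoBCoef,
    isoParity]

end Neighbours

theorem b_mem_span_piS {v u : RootDatum X H} (hu : u ∈ Spine v) {x : X}
    (hx : ¬IsOddIsotropic u x) : u.b x ∈ Submodule.span ℂ (piS v) := by
  by_cases h0 : u.p x = 0
  · exact Submodule.subset_span ⟨u, x, hu, Or.inl ⟨h0, rfl⟩⟩
  have h1 : u.p x = 1 := (by decide : ∀ t : ZMod 2, t ≠ 0 → t = 1) _ h0
  have h2 : (2 : ℂ) • u.b x ∈ Submodule.span ℂ (piS v) :=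
    Submodule.subset_span ⟨u, x, hu, Or.inr ⟨h1, fun hc => hx ⟨h1, hc⟩, rfl⟩⟩
  exact (Submodule.smul_mem_iff _ two_ne_zero).1 h2

theorem span_piS_le {v : RootDatum X H} :
    Submodule.span ℂ (piS v) ≤ Submodule.span ℂ (Set.range v.b) := by
  rw [Submodule.span_le]
  rintro _ ⟨u, x, hu, hα⟩
  have hx : u.b x ∈ Submodule.span ℂ (Set.range v.b) :=
    span_range_b_of_mem_spine hu ▸ Submodule.subset_span ⟨x, rfl⟩
  rcases hα with ⟨-, rfl⟩ | ⟨-, -, rfl⟩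
  exacts [hx, Submodule.smul_mem _ _ hx]

inductive CartanReach (u : RootDatum X H) (x : X) : ℕ → X → Prop
  | refl : CartanReach u x 0 x
  | tail {n : ℕ} {k z : X} : CartanReach u x n k → CartanAdj u k z → CartanReach u x (n + 1) z

theorem CartanReach.isoReflect {u : RootDatum X H} {x y z : X} {n : ℕ}
    (h : CartanReach u x n y) (hz : ∀ m ≤ n, ¬CartanReach u x m z) :
    CartanReach (isoReflect u z) x n y := by
  induction h with
  | refl => exact .refl
  | @tail n k y hk hadj ih =>
    have hkz : k ≠ z := by rintro rfl; exact hz n n.le_succ hk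
    have hfar : ¬CartanAdj u k z := fun h => hz (n + 1) le_rfl (hk.tail h)
    exact (ih fun m hm => hz m (hm.trans n.le_succ)).tail
      ((cartanAdj_isoReflect_iff hkz hfar y).2 hadj)

theorem CartanReach.exists_shortest {u : RootDatum X H} {x z : X} {d : ℕ}
    (h : CartanReach u x d z) :
    ∃ m ≤ d, CartanReach u x m z ∧ ∀ m' < m, ¬CartanReach u x m' z := by
  classical
  have hex : ∃ m, CartanReach u x m z := ⟨d, h⟩
  exact ⟨_, Nat.find_min' hex h, Nat.find_spec hex, fun _ => Nat.find_min hex⟩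

theorem exists_cartanReach_of_isIndecMatrix [Fintype X] {u : RootDatum X H}
    (hind : IsIndecMatrix (cartan u)) (x z : X) : ∃ n, CartanReach u x n z := by
  suffices Relation.ReflTransGen (CartanAdj u) x z by
    induction this with
    | refl => exact ⟨0, .refl⟩
    | tail _ hadj ih => exact ih.elim fun n hn => ⟨n + 1, hn.tail hadj⟩
  have : Std.Symm (CartanAdj u) := ⟨fun _ _ h => h.symm⟩
  rcases hind with hcard | ⟨s, e, he⟩
  · rw [Fintype.card_eq_one_iff.1 hcard |>.choose_spec x,
      Fintype.card_eq_one_iff.1 hcard |>.choose_spec z]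
  have hs : 0 < s := Fin.pos (e.symm x)
  have hwalk : ∀ j (hj : j < s), Relation.ReflTransGen (CartanAdj u) (e ⟨0, hs⟩) (e ⟨j, hj⟩) := by
    intro j
    induction j with
    | zero => exact fun _ => .refl
    | succ j ih =>
      intro hj
      refine (ih (by omega)).tail (Or.inl ?_)
      convert he ⟨j, by omega⟩ using 3
      simp [Nat.mod_eq_of_lt hj]
  have hx := hwalk _ (e.symm x).2
  have hz := hwalk _ (e.symm z).2
  simp only [Fin.eta, Equiv.apply_symm_apply] at hx hz
  exact (Std.Symm.symm _ _ hx).trans hz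

theorem cartan_ne_zero_of_cartanAdj {v u : RootDatum X H} (hadm : Admissible v)
    (hu : u ∈ Skeleton v) {z k : X} (hz : IsOddIsotropic u z) (hadj : CartanAdj u k z) :
    cartan u z k ≠ 0 := fun h =>
  hadj.elim (· (hadm u hu z (isOddIsotropic_iff.1 hz).1 k h)) (· h)

theorem b_mem_span_piS_of_cartanReach {v : RootDatum X H} (hadm : Admissible v) (d : ℕ) :
    ∀ u ∈ Spine v, ∀ x z, IsOddIsotropic u x → u.b x ∈ Submodule.span ℂ (piS v) →
      CartanReach u x d z → u.b z ∈ Submodule.span ℂ (piS v) := by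
  induction d using Nat.strong_induction_on with | _ d IH => ?_
  intro u hu x z hx hbx hreach
  obtain ⟨m, hmd, hm, hmin⟩ := hreach.exists_shortest
  cases hm with
  | refl => exact hbx
  | @tail n k _ hk hadj =>
  by_cases hz : IsOddIsotropic u z
  swap
  · exact b_mem_span_piS hu hz
  have hzk := cartan_ne_zero_of_cartanAdj hadm (spine_subset_skeleton v hu) hz hadj
  have hkz : k ≠ z := by rintro rfl; exact hzk hz.2
  have hbk := IH n (by omega) u hu x k hx hbx hk
  have hu' := isoReflect_mem_spine hu hz
  suffices (isoReflect u z).b k ∈ Submodule.span ℂ (piS v) by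
    rwa [isoReflect_b_of_cartan_ne_zero hkz hzk, Submodule.add_mem_iff_right _ hbk] at this
  by_cases hk' : IsOddIsotropic (isoReflect u z) k
  swap
  · exact b_mem_span_piS hu' hk'
  have hxz : x ≠ z := by rintro rfl; exact hmin 0 (by omega) .refl
  have hfar : ¬CartanAdj u x z := by
    intro hadjx
    rcases n with _ | n
    · cases hk
      exact absurd hk'.1 (by rw [isoReflect_p_of_cartan_ne_zero hkz hzk, hx.1]; decide)
    · exact hmin 1 (by omega) (CartanReach.refl.tail hadjx)
  refine IH n (by omega) _ hu' x k ((isOddIsotropic_isoReflect_iff hxz hfar).2 hx) ?_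
    (hk.isoReflect fun m hm => hmin m (by omega))
  rwa [isoReflect_b_of_not_cartanAdj hxz hfar]

/-- Along a path of reflexions from `v`, an anisotropic reflexion composes `W` with a
reflection in a root of `span π_S`, and an isotropic one is mirrored at `u₀`. -/
def IsSpineTranslate (v u : RootDatum X H) : Prop :=
  ∃ u₀ ∈ Spine v, ∃ W : Module.Dual ℂ H →ₗ[ℂ] Module.Dual ℂ H,
    (∀ μ, W μ ∈ Submodule.span ℂ (piS v) ↔ μ ∈ Submodule.span ℂ (piS v)) ∧
    (∀ y, u.b y = W (u₀.b y)) ∧ cartan u = cartan u₀ ∧ u.p = u₀.p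

theorem cartan_eq_of_isAnisoReflexion {u u' : RootDatum X H} {t : X}
    (h : IsAnisoReflexion t u u') : cartan u' = cartan u := by
  obtain ⟨-, htt, -, ha, hb⟩ := h
  funext y z
  have : cartan u t t * cartan u' y z = cartan u t t * cartan u y z := by
    simp only [cartan, ha, hb, map_sub, map_smul, LinearMap.sub_apply, LinearMap.smul_apply,
      smul_eq_mul] at htt ⊢
    field_simp
    ring
  exact mul_left_cancel₀ htt this

theorem IsSpineTranslate.of_isAnisoReflexion {v u u' : RootDatum X H} {t : X}
    (hu : IsSpineTranslate v u) (h : IsAnisoReflexion t u u') : IsSpineTranslate v u' := by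
  obtain ⟨u₀, hu₀, W, hW, hb, hc, hp⟩ := hu
  have htt := h.2.1
  have hbt : u.b t ∈ Submodule.span ℂ (piS v) :=
    hb t ▸ (hW _).2 (b_mem_span_piS hu₀ fun h => htt (hc ▸ h.2))
  let s := Module.preReflection (u.b t) ((2 / cartan u t t) • Module.Dual.eval ℂ H (u.a t))
  refine ⟨u₀, hu₀, s ∘ₗ W, fun μ => ?_, fun y => ?_, (cartan_eq_of_isAnisoReflexion h).trans hc,
    h.2.2.1.trans hp⟩
  · simp only [s, LinearMap.comp_apply, Module.preReflection_apply]
    rw [Submodule.sub_mem_iff_left _ (Submodule.smul_mem _ _ hbt), hW]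
  · simp only [s, LinearMap.comp_apply, Module.preReflection_apply, ← hb, h.2.2.2.2 y]
    simp only [LinearMap.smul_apply, Module.Dual.eval_apply, smul_eq_mul]
    congr 2
    change _ = _ * cartan u t y
    ring

theorem IsSpineTranslate.of_isIsoReflexion {v u u' : RootDatum X H} {t : X}
    (hu : IsSpineTranslate v u) (h : IsIsoReflexion t u u') : IsSpineTranslate v u' := by
  obtain ⟨u₀, hu₀, W, hW, hb, hc, hp⟩ := hu
  have ht : IsOddIsotropic u₀ t := (isOddIsotropic_iff.2 ⟨h.1, h.2.1⟩).of_cartan_eq hc hp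
  rw [h.eq_isoReflect]
  refine ⟨isoReflect u₀ t, isoReflect_mem_spine hu₀ ht, W, hW, fun y => ?_, ?_, ?_⟩
  · simp [isoReflect, hb, hc]
  · funext y z
    simp only [cartan_isoReflect, hc]
  · simp only [isoReflect, hc, hp]

theorem isSpineTranslate_of_mem_skeleton {v u : RootDatum X H} (hu : u ∈ Skeleton v) :
    IsSpineTranslate v u := by
  obtain ⟨ms, hpath⟩ := hu
  suffices h : ∀ {w ms}, IsPath w ms u → IsSpineTranslate v w → IsSpineTranslate v u from
    h hpath ⟨v, self_mem_spine v, .id, fun _ => .rfl, fun _ => rfl, rfl, rfl⟩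
  intro w ns hwu
  clear hpath
  induction hwu with
  | nil => exact id
  | cons hr _ ih => exact fun hw => ih (hr.elim hw.of_isAnisoReflexion hw.of_isIsoReflexion)

end

theorem stmt0_general {X : Type*} [Fintype X] {H : Type*} [AddCommGroup H] [Module ℂ H]
    (v : RootDatum X H)
    (hadm : Admissible v) (hind : IndecComp v)
    (hmeet : ((Submodule.span ℂ (piS v) : Set (Module.Dual ℂ H)) ∩ DeltaIs v).Nonempty) :
    Submodule.span ℂ (piS v) = Submodule.span ℂ (Set.range v.b) := by
  obtain ⟨_, hβ, u, x, hu, hrefl, hxx, rfl⟩ := hmeet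
  obtain ⟨u₀, hu₀, W, hW, hb, hc, hp⟩ := isSpineTranslate_of_mem_skeleton hu
  have hx₀ : IsOddIsotropic u₀ x := (isOddIsotropic_iff.2 ⟨hrefl, hxx⟩).of_cartan_eq hc hp
  have hbx₀ : u₀.b x ∈ Submodule.span ℂ (piS v) := (hW _).1 (hb x ▸ hβ)
  refine span_piS_le.antisymm ?_
  rw [← span_range_b_of_mem_spine hu₀, Submodule.span_le, Set.range_subset_iff]
  intro y
  obtain ⟨n, hn⟩ := exists_cartanReach_of_isIndecMatrix (hind u₀ hu₀) x y
  exact b_mem_span_piS_of_cartanReach hadm n u₀ hu₀ x y hx₀ hbx₀ hn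

/-- For an indecomposable admissible component, if the ℂ-span of `π_S`
meets `Δ_is`, then the ℂ-span of `π_S` equals the ℂ-span of `Σ_v`. -/
theorem stmt0 {X : Type*} [Fintype X] {H : Type*} [AddCommGroup H] [Module ℂ H]
    [FiniteDimensional ℂ H] (v : RootDatum X H)
    (hadm : Admissible v) (hind : IndecComp v)
    (hmeet : ((Submodule.span ℂ (piS v) : Set (Module.Dual ℂ H)) ∩ DeltaIs v).Nonempty) :
    Submodule.span ℂ (piS v) = Submodule.span ℂ (Set.range v.b) :=
  stmt0_general v hadm hind hmeet

end KMS
end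

section
/- Let B be an indecomposable generalized Cartan matrix of type (IND) indexed by a finite set pi. Then, in V = R^pi, the set {z_mu : mu in Q^{++}_R, mu != 0} coincides with the closure (in the metric topology of V) of the set {z_alpha : alpha in Delta^{im,+}}. -/
namespace KMS10

noncomputable section

variable {π : Type*} [Fintype π] [DecidableEq π]

/-- The standard basis vector `e_α` of `V = ℝ^π` (with the Euclidean norm). -/
def eVec (α : π) : EuclideanSpace ℝ π := EuclideanSpace.single α 1

/-- The Weyl group of the generalized Cartan matrix `B`: the subgroup of `GL(V)`
generated by the reflections `s_α : e_β ↦ e_β - b_{αβ} e_α`. -/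
def gcmWeyl (B : π → π → ℤ) : Subgroup (EuclideanSpace ℝ π ≃ₗ[ℝ] EuclideanSpace ℝ π) :=
  Subgroup.closure {w | ∃ α : π, ∀ β : π, w (eVec β) = eVec β - (B α β : ℝ) • eVec α}

/-- The cone `C(π)` of nonnegative real combinations of the `e_α`. -/
def gcmCone : Set (EuclideanSpace ℝ π) :=
  {μ | ∃ c : π → ℝ, (∀ α, 0 ≤ c α) ∧ μ = ∑ α, c α • eVec α}

/-- The semilattice `Q^+` of nonnegative integral combinations of the `e_α`. -/
def gcmQplus : Set (EuclideanSpace ℝ π) := {μ | ∀ α, ∃ n : ℕ, μ α = n}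

/-- The totally positive cone `Q^{++}_ℝ = ⋂_{w ∈ W} w C(π)`. -/
def gcmQpp (B : π → π → ℤ) : Set (EuclideanSpace ℝ π) :=
  ⋂ w ∈ gcmWeyl B, ⇑w '' gcmCone

/-- The support of `μ` is connected in the Dynkin graph of `B`. -/
def SuppConnected (B : π → π → ℤ) (μ : EuclideanSpace ℝ π) : Prop :=
  ∀ a, μ a ≠ 0 → ∀ b, μ b ≠ 0 →
    Relation.ReflTransGen (fun x y => μ x ≠ 0 ∧ μ y ≠ 0 ∧ x ≠ y ∧ B x y ≠ 0) a b

/-- The fundamental domain `K` for the positive imaginary roots. -/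
def gcmK (B : π → π → ℤ) : Set (EuclideanSpace ℝ π) :=
  {μ ∈ gcmQplus | μ ≠ 0 ∧ SuppConnected B μ ∧ ∀ α, (∑ β, (B α β : ℝ) * μ β) ≤ 0}

/-- The set of positive imaginary roots `Δ^{im,+} = ⋃_{w ∈ W} w K`. -/
def gcmImPlus (B : π → π → ℤ) : Set (EuclideanSpace ℝ π) :=
  ⋃ w ∈ gcmWeyl B, ⇑w '' gcmK B


/-!
Both sides lie on the unit sphere. Every positive imaginary root lies in `Q^{++}_ℝ` by Kac's
positivity lemma: if `ℓ(w s_i) ≥ ℓ(w)` then `w e_i ≥ 0`. It is proved by induction on `ℓ(w)`,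
splitting `w = v u` with `u` in a rank-two subgroup `⟨s_i, s_j⟩` and `v` without descents in
`{s_i, s_j}`; the coefficients of `u e_i` on `e_i, e_j` are nonnegative by an explicit computation
(for `b_{ij} b_{ji} < 4` using the dihedral relation `(s_i s_j)^m = 1`, `m ∈ {2, 3, 4, 6}`). As
`Q^{++}_ℝ` is a closed cone, this gives `⊇`.

Conversely, (IND) gives `Q^{++}_ℝ` nonempty interior, so the convex set `Q^{++}_ℝ` is the closure
of its interior. A `W`-conjugate of least height of an interior point `x` is antidominant
(`W` acts by integer matrices, and the interior ball bounds their entries), and an antidominant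
`y` is the limit of `N⁻¹ ⌈N y + u⌉`, where `⌈N y + u⌉ ∈ K` once `B u ≤ -2`, `u > 0`. So `x` is a
limit of positive multiples of imaginary roots, and normalizing gives `⊆`.
-/

open Topology Filter Pointwise CoxeterSystem

local notation "V" => EuclideanSpace ℝ π

section Reflections

omit [Fintype π] in
@[simp] lemma eVec_apply (α k : π) : eVec α k = if k = α then 1 else 0 := by
  simp [eVec]

omit [Fintype π] in
lemma eVec_nonneg (α k : π) : 0 ≤ eVec α k := by
  rw [eVec_apply]; split_ifs <;> norm_num

lemma basisFun_eq_eVec (α : π) : (EuclideanSpace.basisFun π ℝ).toBasis α = eVec α := by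
  ext k; simp [EuclideanSpace.basisFun_apply]

lemma linearEquiv_ext_eVec {w w' : V ≃ₗ[ℝ] V} (h : ∀ α, w (eVec α) = w' (eVec α)) : w = w' :=
  LinearEquiv.toLinearMap_injective <|
    (EuclideanSpace.basisFun π ℝ).toBasis.ext fun α => by simpa [basisFun_eq_eVec] using h α

variable (B : π → π → ℤ)

/-- The pairing `v ↦ ⟨v, α_i^∨⟩ = (B v)_i`. -/
def coroot (i : π) : V →ₗ[ℝ] ℝ where
  toFun v := ∑ β, (B i β : ℝ) * v β
  map_add' x y := by simp [mul_add, Finset.sum_add_distrib]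
  map_smul' c x := by simp [Finset.mul_sum, mul_left_comm]

omit [DecidableEq π] in
lemma coroot_apply (i : π) (v : V) : coroot B i v = ∑ β, (B i β : ℝ) * v β := rfl

@[simp] lemma coroot_eVec (i β : π) : coroot B i (eVec β) = B i β := by
  simp [coroot_apply]

variable {B}

lemma coroot_eVec_self (hdiag : ∀ α, B α α = 2) (i : π) : coroot B i (eVec i) = 2 := by
  simp [hdiag]

variable (hdiag : ∀ α, B α α = 2)

def simpleRefl (i : π) : V ≃ₗ[ℝ] V := Module.reflection (coroot_eVec_self hdiag i)

lemma simpleRefl_apply (i : π) (v : V) :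
    simpleRefl hdiag i v = v - coroot B i v • eVec i := rfl

lemma simpleRefl_mul_self (i : π) : simpleRefl hdiag i * simpleRefl hdiag i = 1 :=
  mul_eq_one_iff_eq_inv.mpr (Module.reflection_inv _).symm

lemma simpleRefl_mem_gcmWeyl (i : π) : simpleRefl hdiag i ∈ gcmWeyl B :=
  Subgroup.subset_closure ⟨i, fun β => by simp [simpleRefl_apply]⟩

lemma gcmWeyl_eq_closure : gcmWeyl B = Subgroup.closure (Set.range (simpleRefl hdiag)) := by
  refine congrArg Subgroup.closure (Set.ext fun w => ?_)
  constructor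
  · rintro ⟨i, hi⟩
    exact ⟨i, linearEquiv_ext_eVec fun β => by simp [simpleRefl_apply, hi β]⟩
  · rintro ⟨i, rfl⟩
    exact ⟨i, fun β => by simp [simpleRefl_apply]⟩

end Reflections

section Length

variable {B : π → π → ℤ} (hdiag : ∀ α, B α α = 2)

def wordProd (L : List π) : V ≃ₗ[ℝ] V := (L.map (simpleRefl hdiag)).prod

@[simp] lemma wordProd_nil : wordProd hdiag [] = 1 := rfl

@[simp] lemma wordProd_cons (i : π) (L : List π) :
    wordProd hdiag (i :: L) = simpleRefl hdiag i * wordProd hdiag L := by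
  simp [wordProd]

@[simp] lemma wordProd_append (L L' : List π) :
    wordProd hdiag (L ++ L') = wordProd hdiag L * wordProd hdiag L' := by
  simp [wordProd]

lemma wordProd_reverse (L : List π) : wordProd hdiag L.reverse = (wordProd hdiag L)⁻¹ := by
  induction L with
  | nil => simp
  | cons i L ih =>
    simp [ih, inv_eq_of_mul_eq_one_right (simpleRefl_mul_self hdiag i)]

lemma mem_gcmWeyl_iff {w : V ≃ₗ[ℝ] V} : w ∈ gcmWeyl B ↔ ∃ L, wordProd hdiag L = w := by
  constructor
  · rw [gcmWeyl_eq_closure hdiag]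
    intro hw
    induction hw using Subgroup.closure_induction with
    | mem _ h => obtain ⟨i, rfl⟩ := h; exact ⟨[i], by simp [wordProd]⟩
    | one => exact ⟨[], rfl⟩
    | mul _ _ _ _ h h' =>
      obtain ⟨L, rfl⟩ := h; obtain ⟨L', rfl⟩ := h'; exact ⟨L ++ L', wordProd_append ..⟩
    | inv _ _ h => obtain ⟨L, rfl⟩ := h; exact ⟨L.reverse, wordProd_reverse ..⟩
  · rintro ⟨L, rfl⟩
    induction L with
    | nil => exact Subgroup.one_mem _
    | cons i L ih => simpa using Subgroup.mul_mem _ (simpleRefl_mem_gcmWeyl hdiag i) ih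

/-- Off `gcmWeyl B` the set is empty and the value is the junk `0`. -/
def reflLength (w : V ≃ₗ[ℝ] V) : ℕ :=
  sInf {n | ∃ L : List π, L.length = n ∧ wordProd hdiag L = w}

lemma reflLength_wordProd_le (L : List π) : reflLength hdiag (wordProd hdiag L) ≤ L.length :=
  Nat.sInf_le ⟨L, rfl, rfl⟩

lemma exists_reduced_word {w : V ≃ₗ[ℝ] V} (hw : w ∈ gcmWeyl B) :
    ∃ L : List π, L.length = reflLength hdiag w ∧ wordProd hdiag L = w := by
  obtain ⟨L, rfl⟩ := (mem_gcmWeyl_iff hdiag).mp hw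
  exact Nat.sInf_mem (s := {n | ∃ L' : List π, L'.length = n ∧ wordProd hdiag L' = _})
    ⟨L.length, L, rfl, rfl⟩

lemma reflLength_mul_wordProd_le {w : V ≃ₗ[ℝ] V} (hw : w ∈ gcmWeyl B) (L : List π) :
    reflLength hdiag (w * wordProd hdiag L) ≤ reflLength hdiag w + L.length := by
  obtain ⟨L₀, hL₀, rfl⟩ := exists_reduced_word hdiag hw
  simpa [← hL₀] using reflLength_wordProd_le hdiag (L₀ ++ L)

lemma reflLength_mul_simpleRefl_le {w : V ≃ₗ[ℝ] V} (hw : w ∈ gcmWeyl B) (i : π) :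
    reflLength hdiag (w * simpleRefl hdiag i) ≤ reflLength hdiag w + 1 := by
  simpa [wordProd] using reflLength_mul_wordProd_le hdiag hw [i]

lemma reflLength_le_mul_simpleRefl {w : V ≃ₗ[ℝ] V} (hw : w ∈ gcmWeyl B) (i : π) :
    reflLength hdiag w ≤ reflLength hdiag (w * simpleRefl hdiag i) + 1 := by
  simpa [mul_assoc, simpleRefl_mul_self] using reflLength_mul_simpleRefl_le hdiag
    (Subgroup.mul_mem _ hw (simpleRefl_mem_gcmWeyl hdiag i)) i

lemma eq_one_of_reflLength_eq_zero {w : V ≃ₗ[ℝ] V} (hw : w ∈ gcmWeyl B)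
    (h : reflLength hdiag w = 0) : w = 1 := by
  obtain ⟨L, hL, rfl⟩ := exists_reduced_word hdiag hw
  simp [List.length_eq_zero_iff.mp (hL.trans h)]

lemma exists_reflLength_mul_simpleRefl_add_one {w : V ≃ₗ[ℝ] V} (hw : w ∈ gcmWeyl B)
    (h : reflLength hdiag w ≠ 0) :
    ∃ j, reflLength hdiag (w * simpleRefl hdiag j) + 1 = reflLength hdiag w := by
  obtain ⟨L, hL, rfl⟩ := exists_reduced_word hdiag hw
  obtain ⟨L', j, rfl⟩ := List.eq_nil_or_concat L |>.resolve_left (by rintro rfl; simp_all)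
  refine ⟨j, le_antisymm ?_ (reflLength_le_mul_simpleRefl hdiag hw j)⟩
  have := reflLength_wordProd_le hdiag L'
  simp_all [wordProd, mul_assoc, simpleRefl_mul_self]
  omega

end Length

section Rank2

open Polynomial.Chebyshev in
lemma simpleRefl_mul_pow_eq_one {B : π → π → ℤ} (hdiag : ∀ α, B α α = 2) {i j : π} {m : ℕ}
    (h : (B i j = 0 ∧ B j i = 0 ∧ m = 2) ∨ (B i j * B j i = 1 ∧ m = 3) ∨
      (B i j * B j i = 2 ∧ m = 4) ∨ (B i j * B j i = 3 ∧ m = 6)) :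
    (simpleRefl hdiag i * simpleRefl hdiag j) ^ m = 1 := by
  apply LinearEquiv.toLinearMap_injective
  rw [simpleRefl, simpleRefl, Module.reflection_mul_reflection_pow]
  refine LinearMap.ext fun z => ?_
  simp only [coroot_eVec, LinearMap.add_apply, LinearMap.smul_apply, LinearMap.sub_apply,
    LinearMap.smulRight_apply, LinearMap.id_apply]
  rcases h with ⟨h1, h2, rfl⟩ | ⟨h, rfl⟩ | ⟨h, rfl⟩ | ⟨h, rfl⟩
  · simp only [h1, h2]
    norm_num
    module
  all_goals
    simp only [← Int.cast_mul, h]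
    norm_num [S_two]

lemma map_alternatingWord {α β : Type*} (f : α → β) (i j : α) (m : ℕ) :
    (alternatingWord i j m).map f = alternatingWord (f i) (f j) m := by
  induction m with
  | zero => rfl
  | succ m ih => rw [alternatingWord_succ', alternatingWord_succ', List.map_cons, ih, apply_ite f]

lemma prod_alternatingWord {G : Type*} [Group G] (g h : G) (m : ℕ) :
    (alternatingWord g h m).prod = (if Even m then 1 else h) * (g * h) ^ (m / 2) := by
  induction m with
  | zero => simp [alternatingWord]
  | succ m ih =>
    rw [alternatingWord_succ', List.prod_cons, ih]
    rcases Nat.even_or_odd' m with ⟨t, rfl | rfl⟩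
    · simp [show (2 * t + 1) / 2 = t by omega]
    · have heven : Even (2 * t + 1 + 1) := ⟨t + 1, by ring⟩
      simp [heven, show (2 * t + 1) / 2 = t by omega, show (2 * t + 1 + 1) / 2 = t + 1 by omega,
        pow_succ', mul_assoc]

lemma prod_alternatingWord_swap {G : Type*} [Group G] {g h : G} (hg : g * g = 1) (hh : h * h = 1)
    {m : ℕ} (hm : (g * h) ^ m = 1) :
    (alternatingWord g h m).prod = (alternatingWord h g m).prod := by
  have hinv : h * g = (g * h)⁻¹ := by
    rw [mul_inv_rev, inv_eq_of_mul_eq_one_right hg, inv_eq_of_mul_eq_one_right hh]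
  rw [prod_alternatingWord, prod_alternatingWord, hinv, inv_pow]
  rcases Nat.even_or_odd' m with ⟨t, rfl | rfl⟩
  · have hsq : (g * h) ^ t * (g * h) ^ t = 1 := by rw [← pow_add, ← two_mul, hm]
    simp only [even_two_mul, if_true, one_mul, Nat.mul_div_cancel_left t two_pos]
    exact eq_inv_of_mul_eq_one_left hsq
  · have hsq : (g * h) ^ (t + 1) * (g * h) ^ t = 1 := by rw [← pow_add, ← hm]; ring_nf
    have ht : (2 * t + 1) / 2 = t := by omega
    simp only [Nat.not_even_two_mul_add_one, if_false, ht, ← eq_inv_of_mul_eq_one_left hsq,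
      pow_succ', ← mul_assoc, hg, one_mul]

/-- With `a = -b_{ij}`, `b = -b_{ji}`: the coefficients of `⋯ s_j s_i s_j e_i` (`s` alternating
factors) on `e_i` and `e_j`. -/
def rank2Coeff (a b : ℝ) : ℕ → ℝ × ℝ
  | 0 => (1, 0)
  | s + 1 =>
    if Even s then ((rank2Coeff a b s).1, b * (rank2Coeff a b s).1 - (rank2Coeff a b s).2)
    else (a * (rank2Coeff a b s).2 - (rank2Coeff a b s).1, (rank2Coeff a b s).2)

lemma wordProd_alternatingWord_eVec {B : π → π → ℤ} (hdiag : ∀ α, B α α = 2) (i j : π) (s : ℕ) :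
    wordProd hdiag (alternatingWord i j s) (eVec i) =
      (rank2Coeff (-B i j) (-B j i) s).1 • eVec i +
        (rank2Coeff (-B i j) (-B j i) s).2 • eVec j := by
  induction s with
  | zero => simp [alternatingWord, rank2Coeff]
  | succ s ih =>
    rw [alternatingWord_succ', wordProd_cons, LinearEquiv.mul_apply, ih, rank2Coeff]
    split_ifs <;>
    · simp only [simpleRefl_apply, map_add, map_smul, coroot_eVec, hdiag]
      push_cast
      module

lemma rank2Coeff_nonneg {a b : ℝ} (ha : 0 ≤ a) (hb : 0 ≤ b) (hab : 4 ≤ a * b) (s : ℕ) :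
    0 ≤ (rank2Coeff a b s).1 ∧ 0 ≤ (rank2Coeff a b s).2 := by
  suffices h : (0 ≤ (rank2Coeff a b s).1 ∧ 0 ≤ (rank2Coeff a b s).2) ∧
      if Even s then a * (rank2Coeff a b s).2 ≤ 2 * (rank2Coeff a b s).1
      else b * (rank2Coeff a b s).1 ≤ 2 * (rank2Coeff a b s).2 from h.1
  induction s with
  | zero => simp [rank2Coeff]
  | succ s ih =>
    obtain ⟨⟨hp, hq⟩, hinv⟩ := ih
    by_cases hs : Even s
    · simp only [hs, if_true] at hinv
      simp only [rank2Coeff, hs, if_true, Nat.even_add_one, not_true_eq_false, if_false]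
      refine ⟨⟨hp, ?_⟩, ?_⟩ <;> nlinarith
    · simp only [hs, if_false] at hinv
      simp only [rank2Coeff, hs, if_false, Nat.even_add_one, not_false_eq_true, if_true]
      refine ⟨⟨?_, hq⟩, ?_⟩ <;> nlinarith

lemma rank2Coeff_nonneg_or_pow_eq_one {B : π → π → ℤ} (hdiag : ∀ α, B α α = 2)
    (hoff : ∀ α β, α ≠ β → B α β ≤ 0) (hzero : ∀ α β, B α β = 0 ↔ B β α = 0)
    {i j : π} (hij : i ≠ j) :
    (∀ s, 0 ≤ (rank2Coeff (-B i j) (-B j i) s).1 ∧ 0 ≤ (rank2Coeff (-B i j) (-B j i) s).2) ∨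
    ∃ m, 1 ≤ m ∧ (simpleRefl hdiag i * simpleRefl hdiag j) ^ m = 1 ∧
      ∀ s < m, 0 ≤ (rank2Coeff (-B i j) (-B j i) s).1 ∧ 0 ≤ (rank2Coeff (-B i j) (-B j i) s).2 := by
  have hij0 := hoff i j hij
  have hji0 := hoff j i hij.symm
  by_cases h4 : 4 ≤ B i j * B j i
  · left
    refine rank2Coeff_nonneg (by simp [hij0]) (by simp [hji0]) ?_
    rw [neg_mul_neg]
    exact_mod_cast h4
  right
  have hz := hzero i j
  have hvals : (B i j = 0 ∧ B j i = 0) ∨ (B i j = -1 ∧ B j i = -1) ∨ (B i j = -1 ∧ B j i = -2) ∨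
      (B i j = -2 ∧ B j i = -1) ∨ (B i j = -1 ∧ B j i = -3) ∨ (B i j = -3 ∧ B j i = -1) := by
    by_cases h0 : B i j = 0
    · exact Or.inl ⟨h0, hz.mp h0⟩
    have h1 : B i j ≤ -1 := by omega
    have h2 : B j i ≤ -1 := by have := mt hz.mpr h0; omega
    have h3 : -3 ≤ B i j := by nlinarith
    have h4 : -3 ≤ B j i := by nlinarith
    interval_cases hb : B i j <;> interval_cases hb' : B j i <;> simp_all
  -- the finite dihedral types `A₁ × A₁`, `A₂`, `B₂`, `G₂`, of orders `2, 3, 4, 6`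
  rcases hvals with ⟨hb, hb'⟩ | ⟨hb, hb'⟩ | ⟨hb, hb'⟩ | ⟨hb, hb'⟩ | ⟨hb, hb'⟩ | ⟨hb, hb'⟩
  · exact ⟨2, by norm_num, simpleRefl_mul_pow_eq_one hdiag (by simp [hb, hb']),
      fun s hs => by interval_cases s <;> norm_num [rank2Coeff, hb, hb']⟩
  · exact ⟨3, by norm_num, simpleRefl_mul_pow_eq_one hdiag (by simp [hb, hb']),
      fun s hs => by interval_cases s <;> norm_num [rank2Coeff, hb, hb']⟩
  · exact ⟨4, by norm_num, simpleRefl_mul_pow_eq_one hdiag (by simp [hb, hb']),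
      fun s hs => by interval_cases s <;> norm_num [rank2Coeff, hb, hb']⟩
  · exact ⟨4, by norm_num, simpleRefl_mul_pow_eq_one hdiag (by simp [hb, hb']),
      fun s hs => by interval_cases s <;> norm_num [rank2Coeff, hb, hb']⟩
  · exact ⟨6, by norm_num, simpleRefl_mul_pow_eq_one hdiag (by simp [hb, hb']),
      fun s hs => by interval_cases s <;> norm_num [rank2Coeff, hb, hb']⟩
  · exact ⟨6, by norm_num, simpleRefl_mul_pow_eq_one hdiag (by simp [hb, hb']),
      fun s hs => by interval_cases s <;> norm_num [rank2Coeff, hb, hb']⟩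

end Rank2

section Positivity

lemma exists_first_of_descent {f : ℕ → ℕ} {P : ℕ → Prop} (h : ∀ t, ¬ P t → f (t + 1) + 1 = f t) :
    ∃ s, P s ∧ ∀ t ≤ s, f t + t = f 0 := by
  classical
  have hdesc : ∀ s, (∀ t < s, ¬ P t) → f s + s = f 0 := by
    intro s
    induction s with
    | zero => simp
    | succ s ih =>
      intro hs
      have := h s (hs s (by omega))
      have := ih fun t ht => hs t (by omega)
      omega
  have hex : ∃ s, P s := by
    by_contra! hP
    have := hdesc (f 0 + 1) fun t _ => hP t
    omega
  exact ⟨Nat.find hex, Nat.find_spec hex,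
    fun t ht => hdesc t fun t' ht' => Nat.find_min hex (by omega)⟩

variable {B : π → π → ℤ} (hdiag : ∀ α, B α α = 2)

lemma wordProd_mem_gcmWeyl (L : List π) : wordProd hdiag L ∈ gcmWeyl B :=
  (mem_gcmWeyl_iff hdiag).mpr ⟨L, rfl⟩

lemma mul_inv_wordProd_mem_gcmWeyl {w : V ≃ₗ[ℝ] V} (hw : w ∈ gcmWeyl B) (L : List π) :
    w * (wordProd hdiag L)⁻¹ ∈ gcmWeyl B :=
  Subgroup.mul_mem _ hw (Subgroup.inv_mem _ (wordProd_mem_gcmWeyl hdiag L))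

lemma mul_inv_wordProd_alternatingWord_succ (w : V ≃ₗ[ℝ] V) (i j : π) (t : ℕ) :
    w * (wordProd hdiag (alternatingWord i j (t + 1)))⁻¹ =
      w * (wordProd hdiag (alternatingWord i j t))⁻¹ *
        simpleRefl hdiag (if Even t then j else i) := by
  rw [alternatingWord_succ', wordProd_cons, mul_inv_rev,
    inv_eq_of_mul_eq_one_right (simpleRefl_mul_self hdiag _), mul_assoc]

/-- Walk from `w` along `s_j, s_i, s_j, …` while the length drops; where the walk stops, neither
`s_i` nor `s_j` is a descent. -/
lemma exists_rank2_ascent {w : V ≃ₗ[ℝ] V} (hw : w ∈ gcmWeyl B) {i j : π}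
    (hi : reflLength hdiag w ≤ reflLength hdiag (w * simpleRefl hdiag i))
    (hj : reflLength hdiag (w * simpleRefl hdiag j) < reflLength hdiag w) :
    ∃ s, 1 ≤ s ∧
      (∀ t ≤ s, reflLength hdiag (w * (wordProd hdiag (alternatingWord i j t))⁻¹) + t =
        reflLength hdiag w) ∧
      ∀ k ∈ [i, j], reflLength hdiag (w * (wordProd hdiag (alternatingWord i j s))⁻¹) ≤
        reflLength hdiag (w * (wordProd hdiag (alternatingWord i j s))⁻¹ * simpleRefl hdiag k) := by
  set v : ℕ → V ≃ₗ[ℝ] V := fun t => w * (wordProd hdiag (alternatingWord i j t))⁻¹ with hv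
  have hvmem : ∀ t, v t ∈ gcmWeyl B := fun t =>
    mul_inv_wordProd_mem_gcmWeyl hdiag hw (alternatingWord i j t)
  have hv0 : v 0 = w := by simp [hv, alternatingWord]
  obtain ⟨s, hPs, hlen⟩ := exists_first_of_descent (f := fun t => reflLength hdiag (v t))
    (P := fun t => reflLength hdiag (v t) ≤
      reflLength hdiag (v t * simpleRefl hdiag (if Even t then j else i)))
    fun t ht => by
      have := reflLength_le_mul_simpleRefl hdiag (hvmem t) (if Even t then j else i)
      simp only [hv, mul_inv_wordProd_alternatingWord_succ] at ht this ⊢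
      omega
  simp only [hv0] at hlen
  obtain _ | t := s
  · simp [hv0] at hPs
    omega
  have hback : v (t + 1) * simpleRefl hdiag (if Even t then j else i) = v t := by
    simp only [hv, mul_inv_wordProd_alternatingWord_succ, mul_assoc, simpleRefl_mul_self, mul_one]
  have hprev : reflLength hdiag (v (t + 1)) ≤
      reflLength hdiag (v (t + 1) * simpleRefl hdiag (if Even t then j else i)) := by
    have := hlen t (by omega)
    have := hlen (t + 1) le_rfl
    rw [hback]
    omega
  refine ⟨t + 1, by omega, hlen, fun k hk => ?_⟩
  simp only [Nat.even_add_one] at hPs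
  simp only [List.mem_cons, List.not_mem_nil, or_false] at hk
  by_cases ht : Even t
  · rcases hk with rfl | rfl
    · simpa [ht] using hPs
    · simpa [ht] using hprev
  · rcases hk with rfl | rfl
    · simpa [ht] using hprev
    · simpa [ht] using hPs

lemma reflLength_mul_simpleRefl_add_one_le_of_pow_eq_one {w : V ≃ₗ[ℝ] V} (hw : w ∈ gcmWeyl B)
    {i j : π} {m : ℕ} (hm : 1 ≤ m) (hrel : (simpleRefl hdiag i * simpleRefl hdiag j) ^ m = 1) :
    reflLength hdiag (w * simpleRefl hdiag i) + 1 ≤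
      reflLength hdiag (w * (wordProd hdiag (alternatingWord i j m))⁻¹) + m := by
  obtain ⟨n, rfl⟩ : ∃ n, m = n + 1 := ⟨m - 1, by omega⟩
  have hbraid : wordProd hdiag (alternatingWord i j (n + 1)) =
      wordProd hdiag (alternatingWord i j n) * simpleRefl hdiag i := by
    have :=
      prod_alternatingWord_swap (simpleRefl_mul_self hdiag i) (simpleRefl_mul_self hdiag j) hrel
    rw [← map_alternatingWord, ← map_alternatingWord, alternatingWord_succ j i n] at this
    simpa [wordProd] using this
  have hwi : w * simpleRefl hdiag i = w * (wordProd hdiag (alternatingWord i j (n + 1)))⁻¹ *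
      wordProd hdiag (alternatingWord i j n) := by
    rw [hbraid, mul_inv_rev, inv_eq_of_mul_eq_one_right (simpleRefl_mul_self hdiag i)]
    group
  have := reflLength_mul_wordProd_le hdiag
    (mul_inv_wordProd_mem_gcmWeyl hdiag hw (alternatingWord i j (n + 1))) (alternatingWord i j n)
  rw [← hwi, length_alternatingWord] at this
  omega

lemma rank2Coeff_nonneg_of_reflLength (hoff : ∀ α β, α ≠ β → B α β ≤ 0)
    (hzero : ∀ α β, B α β = 0 ↔ B β α = 0) {w : V ≃ₗ[ℝ] V} (hw : w ∈ gcmWeyl B) {i j : π}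
    (hij : i ≠ j)
    (hi : reflLength hdiag w ≤ reflLength hdiag (w * simpleRefl hdiag i)) {s : ℕ}
    (hs : ∀ t ≤ s, reflLength hdiag (w * (wordProd hdiag (alternatingWord i j t))⁻¹) + t =
      reflLength hdiag w) :
    0 ≤ (rank2Coeff (-B i j) (-B j i) s).1 ∧ 0 ≤ (rank2Coeff (-B i j) (-B j i) s).2 := by
  rcases rank2Coeff_nonneg_or_pow_eq_one hdiag hoff hzero hij with h | ⟨m, hm, hrel, htab⟩
  · exact h s
  refine htab s (lt_of_not_ge fun hms => ?_)
  have := reflLength_mul_simpleRefl_add_one_le_of_pow_eq_one hdiag hw hm hrel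
  have := hs m hms
  omega

/-- Kac, Lemma 3.11. -/
theorem apply_eVec_nonneg_of_reflLength_le (hoff : ∀ α β, α ≠ β → B α β ≤ 0)
    (hzero : ∀ α β, B α β = 0 ↔ B β α = 0) {w : V ≃ₗ[ℝ] V} (hw : w ∈ gcmWeyl B) {i : π}
    (hi : reflLength hdiag w ≤ reflLength hdiag (w * simpleRefl hdiag i)) (k : π) :
    0 ≤ w (eVec i) k := by
  induction hn : reflLength hdiag w using Nat.strong_induction_on generalizing w i with
  | _ n ih =>
  by_cases h0 : n = 0
  · rw [eq_one_of_reflLength_eq_zero hdiag hw (hn.trans h0)]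
    exact eVec_nonneg i k
  obtain ⟨j, hj⟩ := exists_reflLength_mul_simpleRefl_add_one hdiag hw (hn ▸ h0)
  have hij : i ≠ j := by rintro rfl; omega
  obtain ⟨s, hs, hlen, hasc⟩ := exists_rank2_ascent hdiag hw hi (j := j) (by omega)
  obtain ⟨hp, hq⟩ := rank2Coeff_nonneg_of_reflLength hdiag hoff hzero hw hij hi hlen
  have hlt := hlen s le_rfl
  have hv := mul_inv_wordProd_mem_gcmWeyl hdiag hw (alternatingWord i j s)
  set u := wordProd hdiag (alternatingWord i j s)
  have hwi : w (eVec i) = (w * u⁻¹) (u (eVec i)) := by simp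
  rw [hwi, wordProd_alternatingWord_eVec, map_add, map_smul, map_smul]
  simp only [PiLp.add_apply, PiLp.smul_apply, smul_eq_mul]
  exact add_nonneg (mul_nonneg hp (ih _ (by omega) hv (hasc i (by simp)) rfl))
    (mul_nonneg hq (ih _ (by omega) hv (hasc j (by simp)) rfl))

end Positivity

section TotallyPositiveCone

variable {B : π → π → ℤ}

lemma gcmCone_eq : (gcmCone : Set V) = {v | ∀ k, 0 ≤ v k} := by
  ext v
  constructor
  · rintro ⟨c, hc, rfl⟩ k
    simpa [Finset.sum_apply] using hc k
  · intro hv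
    refine ⟨fun α => v α, hv, ?_⟩
    ext k
    simp [Finset.sum_apply]

lemma mem_gcmQpp_iff {v : V} : v ∈ gcmQpp B ↔ ∀ w ∈ gcmWeyl B, ∀ k, 0 ≤ w v k := by
  simp only [gcmQpp, Set.mem_iInter, LinearEquiv.image_eq_preimage_symm, Set.mem_preimage,
    gcmCone_eq, Set.mem_ofPred_eq]
  exact ⟨fun h w hw => h w⁻¹ (inv_mem hw), fun h w hw => h w⁻¹ (inv_mem hw)⟩

lemma gcmQpp_eq_iInter : gcmQpp B = ⋂ w ∈ gcmWeyl B, ⋂ k, {v : V | 0 ≤ w v k} := by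
  ext v
  simp [mem_gcmQpp_iff]

lemma isClosed_gcmQpp : IsClosed (gcmQpp B) := by
  rw [gcmQpp_eq_iInter]
  exact isClosed_biInter fun w _ => isClosed_iInter fun k => isClosed_le continuous_const
    ((PiLp.continuous_apply 2 _ k).comp (w : V →ₗ[ℝ] V).continuous_of_finiteDimensional)

lemma convex_gcmQpp : Convex ℝ (gcmQpp B) := by
  rw [gcmQpp_eq_iInter]
  exact convex_iInter₂ fun w _ => convex_iInter fun k =>
    convex_halfSpace_ge ((EuclideanSpace.proj k : V →L[ℝ] ℝ).toLinearMap.comp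
      (w : V →ₗ[ℝ] V)).isLinear 0

lemma smul_mem_gcmQpp {v : V} (hv : v ∈ gcmQpp B) {c : ℝ} (hc : 0 ≤ c) : c • v ∈ gcmQpp B := by
  rw [mem_gcmQpp_iff] at hv ⊢
  intro w hw k
  simpa using mul_nonneg hc (hv w hw k)

lemma apply_mem_gcmQpp {w : V ≃ₗ[ℝ] V} (hw : w ∈ gcmWeyl B) {v : V} (hv : v ∈ gcmQpp B) :
    w v ∈ gcmQpp B := by
  rw [mem_gcmQpp_iff] at hv ⊢
  exact fun w' hw' => hv (w' * w) (mul_mem hw' hw)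

theorem apply_nonneg_of_antidominant (hdiag : ∀ α, B α α = 2)
    (hoff : ∀ α β, α ≠ β → B α β ≤ 0) (hzero : ∀ α β, B α β = 0 ↔ B β α = 0) {w : V ≃ₗ[ℝ] V}
    (hw : w ∈ gcmWeyl B) {μ : V}
    (hμ : ∀ k, 0 ≤ μ k) (hBμ : ∀ α, coroot B α μ ≤ 0) (k : π) : 0 ≤ w μ k := by
  induction hn : reflLength hdiag w using Nat.strong_induction_on generalizing w with
  | _ n ih =>
  by_cases h0 : n = 0
  · rw [eq_one_of_reflLength_eq_zero hdiag hw (hn.trans h0)]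
    exact hμ k
  obtain ⟨j, hj⟩ := exists_reflLength_mul_simpleRefl_add_one hdiag hw (hn ▸ h0)
  have hw' := Subgroup.mul_mem _ hw (simpleRefl_mem_gcmWeyl hdiag j)
  have hback : w * simpleRefl hdiag j * simpleRefl hdiag j = w := by
    rw [mul_assoc, simpleRefl_mul_self, mul_one]
  have hpos := apply_eVec_nonneg_of_reflLength_le hdiag hoff hzero hw' (i := j)
    (by rw [hback]; omega) k
  have hwμ :
      w μ = (w * simpleRefl hdiag j) μ - coroot B j μ • (w * simpleRefl hdiag j) (eVec j) := by
    conv_lhs => rw [← hback]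
    rw [LinearEquiv.mul_apply, simpleRefl_apply, map_sub, map_smul]
  rw [hwμ, PiLp.sub_apply, PiLp.smul_apply, smul_eq_mul]
  nlinarith [ih _ (by omega) hw' rfl, hBμ j]

variable (B) in
def antidominantCone : Set V := {v | (∀ k, 0 ≤ v k) ∧ ∀ α, coroot B α v ≤ 0}

lemma antidominantCone_subset_gcmQpp (hdiag : ∀ α, B α α = 2) (hoff : ∀ α β, α ≠ β → B α β ≤ 0)
    (hzero : ∀ α β, B α β = 0 ↔ B β α = 0) : antidominantCone B ⊆ gcmQpp B :=
  fun _ hμ => mem_gcmQpp_iff.mpr fun _ hw =>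
    apply_nonneg_of_antidominant hdiag hoff hzero hw hμ.1 hμ.2

omit [DecidableEq π] in
lemma gcmK_subset_antidominantCone : gcmK B ⊆ antidominantCone B := by
  rintro μ ⟨hμ, -, -, hBμ⟩
  refine ⟨fun k => ?_, hBμ⟩
  obtain ⟨n, hn⟩ := hμ k
  exact hn ▸ n.cast_nonneg

lemma gcmImPlus_subset_gcmQpp (hdiag : ∀ α, B α α = 2) (hoff : ∀ α β, α ≠ β → B α β ≤ 0)
    (hzero : ∀ α β, B α β = 0 ↔ B β α = 0) : gcmImPlus B ⊆ gcmQpp B := by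
  simp only [gcmImPlus, Set.iUnion_subset_iff, Set.image_subset_iff]
  exact fun w hw μ hμ => apply_mem_gcmQpp hw
    (antidominantCone_subset_gcmQpp hdiag hoff hzero (gcmK_subset_antidominantCone hμ))

lemma zero_notMem_gcmImPlus : (0 : V) ∉ gcmImPlus B := by
  simp only [gcmImPlus, Set.mem_iUnion, not_exists]
  rintro w - ⟨μ, ⟨-, hμ, -⟩, h⟩
  exact hμ (w.map_eq_zero_iff.mp h)

end TotallyPositiveCone

section Descent

variable {B : π → π → ℤ}

def height (v : V) : ℝ := ∑ k, v k

omit [DecidableEq π] in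
lemma apply_le_height {v : V} (hv : ∀ k, 0 ≤ v k) (k : π) : v k ≤ height v :=
  Finset.single_le_sum (fun l _ => hv l) (Finset.mem_univ k)

lemma height_simpleRefl (hdiag : ∀ α, B α α = 2) (l : π) (v : V) :
    height (simpleRefl hdiag l v) = height v - coroot B l v := by
  simp [height, simpleRefl_apply, Finset.sum_sub_distrib]

lemma exists_int_wordProd_apply (hdiag : ∀ α, B α α = 2) {v : V} (hv : ∀ k, ∃ n : ℤ, v k = n)
    (L : List π) (k : π) :
    ∃ n : ℤ, wordProd hdiag L v k = n := by
  induction L generalizing k with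
  | nil => exact hv k
  | cons i L ih =>
    choose n hn using ih
    refine ⟨n k - (∑ β, B i β * n β) * if k = i then 1 else 0, ?_⟩
    simp [simpleRefl_apply, coroot_apply, hn]

lemma exists_int_apply_eVec (hdiag : ∀ α, B α α = 2) {w : V ≃ₗ[ℝ] V} (hw : w ∈ gcmWeyl B)
    (k l : π) :
    ∃ n : ℤ, w (eVec l) k = n := by
  obtain ⟨L, rfl⟩ := (mem_gcmWeyl_iff hdiag).mp hw
  exact exists_int_wordProd_apply hdiag
    (fun k => ⟨if k = l then 1 else 0, by simp [apply_ite]⟩) L k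

lemma finite_gcmWeyl_abs_apply_eVec_le (hdiag : ∀ α, B α α = 2) (R : ℝ) :
    {w ∈ gcmWeyl B | ∀ k l, |w (eVec l) k| ≤ R}.Finite := by
  let entries : (V ≃ₗ[ℝ] V) → π → π → ℝ := fun w k l => w (eVec l) k
  refine Set.Finite.of_finite_image (f := entries) ?_ fun w _ w' _ h =>
    linearEquiv_ext_eVec fun l => PiLp.ext fun k => congrFun (congrFun h k) l
  refine ((Set.finite_Icc (-fun _ _ => ⌈R⌉) fun _ _ => ⌈R⌉).image
    fun (M : π → π → ℤ) k l => (M k l : ℝ)).subset ?_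
  rintro _ ⟨w, ⟨hw, hR⟩, rfl⟩
  choose M hM using exists_int_apply_eVec hdiag hw
  refine ⟨M, ⟨fun k l => ?_, fun k l => ?_⟩, funext₂ fun k l => (hM k l).symm⟩
  all_goals
    obtain ⟨hlo, hhi⟩ := abs_le.mp ((hM k l).symm ▸ hR k l)
    have := Int.le_ceil R
    simp only [Pi.neg_apply]
  · exact_mod_cast (by linarith : -(⌈R⌉ : ℝ) ≤ M k l)
  · exact_mod_cast (by linarith : (M k l : ℝ) ≤ ⌈R⌉)

lemma abs_apply_eVec_mul_le_height {x : V} {δ : ℝ} (hδ : 0 ≤ δ)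
    (hball : Metric.closedBall x δ ⊆ gcmQpp B) {w : V ≃ₗ[ℝ] V} (hw : w ∈ gcmWeyl B) (k l : π) :
    |w (eVec l) k| * δ ≤ height (w x) := by
  have key : ∀ s, |s| ≤ δ → 0 ≤ w x k + s * w (eVec l) k := fun s hs => by
    have hmem : x + s • eVec l ∈ gcmQpp B := hball <| by
      simpa [Metric.mem_closedBall, dist_eq_norm, norm_smul, eVec] using hs
    simpa using mem_gcmQpp_iff.mp hmem w hw k
  have h₁ := key δ (abs_of_nonneg hδ).le
  have h₂ := key (-δ) (by rw [abs_neg, abs_of_nonneg hδ])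
  have hx : x ∈ gcmQpp B := hball (Metric.mem_closedBall_self hδ)
  calc |w (eVec l) k| * δ = |w (eVec l) k * δ| := by rw [abs_mul, abs_of_nonneg hδ]
    _ ≤ w x k := abs_le.mpr ⟨by linarith, by linarith⟩
    _ ≤ height (w x) := apply_le_height (mem_gcmQpp_iff.mp hx w hw) k

/-- A conjugate of least height is antidominant, as `s_l` lowers the height by `⟨w x, α_l^∨⟩`.
It exists because integrality of `W` and the interior ball leave finitely many candidates. -/
lemma exists_mem_antidominantCone_of_mem_interior (hdiag : ∀ α, B α α = 2) {x : V}
    (hx : x ∈ interior (gcmQpp B)) :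
    ∃ w ∈ gcmWeyl B, w x ∈ antidominantCone B := by
  obtain ⟨δ, hδ, hball⟩ := Metric.nhds_basis_closedBall.mem_iff.mp (mem_interior_iff_mem_nhds.mp hx)
  have hxQ : x ∈ gcmQpp B := interior_subset hx
  set F := {w ∈ gcmWeyl B | ∀ k l, |w (eVec l) k| ≤ height x / δ}
  have hbound : ∀ w ∈ gcmWeyl B, height (w x) ≤ height x → w ∈ F := fun w hw hle =>
    ⟨hw, fun k l => (le_div_iff₀ hδ).mpr
      ((abs_apply_eVec_mul_le_height hδ.le hball hw k l).trans hle)⟩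
  obtain ⟨w, ⟨hw, -⟩, hmin⟩ := Set.exists_min_image F (fun w => height (w x))
    (finite_gcmWeyl_abs_apply_eVec_le hdiag _) ⟨1, hbound 1 (one_mem _) le_rfl⟩
  refine ⟨w, hw, fun k => mem_gcmQpp_iff.mp hxQ w hw k, fun l => not_lt.mp fun hl => ?_⟩
  have hw' := mul_mem (simpleRefl_mem_gcmWeyl hdiag l) hw
  have hlt : height ((simpleRefl hdiag l * w) x) < height (w x) := by
    rw [LinearEquiv.mul_apply, height_simpleRefl hdiag]
    linarith
  have := hmin _ (hbound _ hw' (hlt.le.trans (hmin 1 (hbound 1 (one_mem _) le_rfl))))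
  linarith

end Descent

section Approximation

variable {B : π → π → ℤ}

def natCeil (z : V) : V := WithLp.toLp 2 fun k => (⌈z k⌉₊ : ℝ)

lemma coroot_natCeil_le (hdiag : ∀ α, B α α = 2) (hoff : ∀ α β, α ≠ β → B α β ≤ 0) {z : V}
    (hz : ∀ k, 0 ≤ z k) (α : π) : coroot B α (natCeil z) ≤ coroot B α z + 2 := by
  have hterm : ∀ β, (B α β : ℝ) * ⌈z β⌉₊ ≤ B α β * z β + if β = α then 2 else 0 := fun β => by
    have hlo := Nat.le_ceil (z β)
    have hhi := Nat.ceil_lt_add_one (hz β)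
    split_ifs with h
    · subst h; rw [hdiag]; push_cast; linarith
    · have : (B α β : ℝ) ≤ 0 := by exact_mod_cast hoff α β (Ne.symm h)
      nlinarith
  calc coroot B α (natCeil z) ≤ ∑ β, ((B α β : ℝ) * z β + if β = α then 2 else 0) :=
        Finset.sum_le_sum fun β _ => hterm β
    _ = coroot B α z + 2 := by simp [Finset.sum_add_distrib, coroot_apply]

lemma natCeil_mem_gcmK [Nonempty π] (hdiag : ∀ α, B α α = 2) (hoff : ∀ α β, α ≠ β → B α β ≤ 0)
    (hindec : ∀ a b : π, Relation.ReflTransGen (fun x y => x ≠ y ∧ B x y ≠ 0) a b) {z : V}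
    (hz : ∀ k, 0 < z k) (hBz : ∀ α, coroot B α z ≤ -2) : natCeil z ∈ gcmK B := by
  have hne : ∀ k, natCeil z k ≠ 0 := fun k => by simpa [natCeil] using hz k
  refine ⟨fun k => ⟨_, rfl⟩, fun h => hne (Classical.arbitrary π) (by simp [h]), ?_, fun α => ?_⟩
  · exact fun a _ b _ => Relation.ReflTransGen.mono (fun x y hxy => ⟨hne x, hne y, hxy⟩) a b
      (hindec a b)
  · show coroot B α (natCeil z) ≤ 0
    linarith [coroot_natCeil_le hdiag hoff (fun k => (hz k).le) α, hBz α]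

omit [Fintype π] [DecidableEq π] in
lemma tendsto_inv_smul_natCeil {y u : V} (hy : ∀ k, 0 ≤ y k) (hu : ∀ k, 0 ≤ u k) :
    Tendsto (fun N : ℕ => (N : ℝ)⁻¹ • natCeil ((N : ℝ) • y + u)) atTop (𝓝 y) := by
  refine ((PiLp.continuous_toLp 2 _).tendsto _).comp (tendsto_pi_nhds.mpr fun k => ?_)
  have hcoord : ∀ N : ℕ, ((N : ℝ)⁻¹ • natCeil ((N : ℝ) • y + u)) k =
      (N : ℝ)⁻¹ * ⌈(N : ℝ) * y k + u k⌉₊ := fun N => by simp [natCeil]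
  change Tendsto (fun N : ℕ => ((N : ℝ)⁻¹ • natCeil ((N : ℝ) • y + u)) k) atTop (𝓝 (y k))
  simp only [hcoord]
  have hupper : Tendsto (fun N : ℕ => y k + (N : ℝ)⁻¹ * (u k + 1)) atTop (𝓝 (y k)) := by
    simpa using (tendsto_inv_atTop_nhds_zero_nat.mul_const (u k + 1)).const_add (y k)
  refine tendsto_of_tendsto_of_tendsto_of_le_of_le' tendsto_const_nhds hupper ?_ ?_ <;>
    filter_upwards [eventually_ge_atTop 1] with N hN <;>
    have hN' : (0 : ℝ) < N := by exact_mod_cast hN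
  · have := Nat.le_ceil ((N : ℝ) * y k + u k)
    rw [le_inv_mul_iff₀ hN']
    nlinarith [hu k]
  · have := Nat.ceil_lt_add_one (by nlinarith [hy k, hu k] : 0 ≤ (N : ℝ) * y k + u k)
    rw [inv_mul_le_iff₀ hN', mul_add, ← mul_assoc, mul_inv_cancel₀ hN'.ne', one_mul]
    linarith

end Approximation

section Density

variable {B : π → π → ℤ}

omit [DecidableEq π] in
lemma exists_pos_coroot_le_neg_two
    (hIND : ∃ u : π → ℝ, (∀ α, 0 < u α) ∧ ∀ α, (∑ β, (B α β : ℝ) * u β) < 0) :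
    ∃ u : V, (∀ k, 0 < u k) ∧ ∀ α, coroot B α u ≤ -2 := by
  obtain ⟨u, hu, hBu⟩ := hIND
  have hBu' : ∀ α, 0 < -coroot B α (WithLp.toLp 2 u) := fun α => neg_pos.mpr (hBu α)
  have hterm : ∀ α, 0 ≤ 2 / -coroot B α (WithLp.toLp 2 u) := fun α => (div_pos two_pos (hBu' α)).le
  obtain ⟨c, hc0, hc⟩ : ∃ c : ℝ, 0 < c ∧ ∀ α, 2 ≤ c * -coroot B α (WithLp.toLp 2 u) := by
    refine ⟨1 + ∑ α, 2 / -coroot B α (WithLp.toLp 2 u),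
      add_pos_of_pos_of_nonneg one_pos (Finset.sum_nonneg fun α _ => hterm α), fun α => ?_⟩
    rw [← div_le_iff₀ (hBu' α)]
    linarith [Finset.single_le_sum (fun α _ => hterm α) (Finset.mem_univ α)]
  refine ⟨c • WithLp.toLp 2 u, fun k => by simpa using mul_pos hc0 (hu k), fun α => ?_⟩
  rw [map_smul, smul_eq_mul]
  linarith [hc α]

lemma interior_gcmQpp_nonempty (hdiag : ∀ α, B α α = 2) (hoff : ∀ α β, α ≠ β → B α β ≤ 0)
    (hzero : ∀ α β, B α β = 0 ↔ B β α = 0)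
    (hIND : ∃ u : π → ℝ, (∀ α, 0 < u α) ∧ ∀ α, (∑ β, (B α β : ℝ) * u β) < 0) :
    (interior (gcmQpp B)).Nonempty := by
  obtain ⟨u, hu, hBu⟩ := exists_pos_coroot_le_neg_two hIND
  have hopen : IsOpen ((⋂ k, {v : V | 0 < v k}) ∩ ⋂ α, {v : V | coroot B α v < 0}) :=
    (isOpen_iInter_of_finite fun k =>
      isOpen_lt continuous_const (PiLp.continuous_apply 2 _ k)).inter
      (isOpen_iInter_of_finite fun α =>
        isOpen_lt (coroot B α).continuous_of_finiteDimensional continuous_const)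
  refine ⟨u, interior_maximal (fun v hv => ?_) hopen ?_⟩
  · simp only [Set.mem_inter_iff, Set.mem_iInter, Set.mem_ofPred_eq] at hv
    exact antidominantCone_subset_gcmQpp hdiag hoff hzero
      ⟨fun k => (hv.1 k).le, fun α => (hv.2 α).le⟩
  · simp only [Set.mem_inter_iff, Set.mem_iInter, Set.mem_ofPred_eq]
    exact ⟨hu, fun α => by linarith [hBu α]⟩

lemma antidominantCone_subset_closure [Nonempty π] (hdiag : ∀ α, B α α = 2)
    (hoff : ∀ α β, α ≠ β → B α β ≤ 0)
    (hindec : ∀ a b : π, Relation.ReflTransGen (fun x y => x ≠ y ∧ B x y ≠ 0) a b)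
    (hIND : ∃ u : π → ℝ, (∀ α, 0 < u α) ∧ ∀ α, (∑ β, (B α β : ℝ) * u β) < 0) :
    antidominantCone B ⊆ closure (Set.Ioi (0 : ℝ) • gcmK B) := by
  intro y ⟨hy, hBy⟩
  -- `u` makes the support full and pays for the rounding error in `coroot_natCeil_le`
  obtain ⟨u, hu, hBu⟩ := exists_pos_coroot_le_neg_two hIND
  refine mem_closure_of_tendsto (tendsto_inv_smul_natCeil hy fun k => (hu k).le) ?_
  filter_upwards [eventually_ge_atTop 1] with N hN
  have hN' : (0 : ℝ) < N := by exact_mod_cast hN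
  refine Set.smul_mem_smul (inv_pos.mpr hN') (natCeil_mem_gcmK hdiag hoff hindec (fun k => ?_)
    fun α => ?_)
  · simpa using add_pos_of_nonneg_of_pos (mul_nonneg hN'.le (hy k)) (hu k)
  · rw [map_add, map_smul, smul_eq_mul]
    nlinarith [hBy α, hBu α]

lemma interior_gcmQpp_subset_closure [Nonempty π] (hdiag : ∀ α, B α α = 2)
    (hoff : ∀ α β, α ≠ β → B α β ≤ 0)
    (hindec : ∀ a b : π, Relation.ReflTransGen (fun x y => x ≠ y ∧ B x y ≠ 0) a b)
    (hIND : ∃ u : π → ℝ, (∀ α, 0 < u α) ∧ ∀ α, (∑ β, (B α β : ℝ) * u β) < 0) :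
    interior (gcmQpp B) ⊆ closure (Set.Ioi (0 : ℝ) • gcmImPlus B) := by
  intro x hx
  obtain ⟨w, hw, hwx⟩ := exists_mem_antidominantCone_of_mem_interior hdiag hx
  have hcont : Continuous (w⁻¹ : V ≃ₗ[ℝ] V) :=
    (w⁻¹ : V ≃ₗ[ℝ] V).toLinearMap.continuous_of_finiteDimensional
  have hx' : x ∈ (w⁻¹ : V ≃ₗ[ℝ] V) '' closure (Set.Ioi (0 : ℝ) • gcmK B) :=
    ⟨w x, antidominantCone_subset_closure hdiag hoff hindec hIND hwx, w.symm_apply_apply x⟩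
  refine closure_mono ?_ (image_closure_subset_closure_image hcont hx')
  rintro _ ⟨_, ⟨c, hc, μ, hμ, rfl⟩, rfl⟩
  exact ⟨c, hc, w⁻¹ μ, Set.mem_iUnion₂.mpr ⟨w⁻¹, inv_mem hw, μ, hμ, rfl⟩, (map_smul _ c μ).symm⟩

lemma gcmQpp_subset_closure [Nonempty π] (hdiag : ∀ α, B α α = 2)
    (hoff : ∀ α β, α ≠ β → B α β ≤ 0) (hzero : ∀ α β, B α β = 0 ↔ B β α = 0)
    (hindec : ∀ a b : π, Relation.ReflTransGen (fun x y => x ≠ y ∧ B x y ≠ 0) a b)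
    (hIND : ∃ u : π → ℝ, (∀ α, 0 < u α) ∧ ∀ α, (∑ β, (B α β : ℝ) * u β) < 0) :
    gcmQpp B ⊆ closure (Set.Ioi (0 : ℝ) • gcmImPlus B) :=
  calc gcmQpp B = closure (interior (gcmQpp B)) := by
        rw [convex_gcmQpp.closure_interior_eq_closure_of_nonempty_interior
          (interior_gcmQpp_nonempty hdiag hoff hzero hIND), isClosed_gcmQpp.closure_eq]
    _ ⊆ closure (Set.Ioi (0 : ℝ) • gcmImPlus B) :=
        closure_minimal (interior_gcmQpp_subset_closure hdiag hoff hindec hIND) isClosed_closure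

end Density

section Normalize

variable {E : Type*} [NormedAddCommGroup E] [NormedSpace ℝ E]

lemma normalize_mem_closure_image {S : Set E} {x : E} (hx0 : x ≠ 0)
    (hx : x ∈ closure (Set.Ioi (0 : ℝ) • S)) :
    NormedSpace.normalize x ∈ closure (NormedSpace.normalize '' S) := by
  have hcont : ContinuousAt NormedSpace.normalize x :=
    (continuous_norm.continuousAt.inv₀ (norm_ne_zero_iff.mpr hx0)).smul continuousAt_id
  refine closure_mono ?_ (mem_closure_image hcont hx)
  rintro _ ⟨_, ⟨c, hc, μ, hμ, rfl⟩, rfl⟩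
  exact ⟨μ, hμ, (NormedSpace.normalize_smul_of_pos hc μ).symm⟩

lemma setOf_normalize_eq_inter_sphere {S : Set E} (hS : ∀ v ∈ S, ∀ c : ℝ, 0 ≤ c → c • v ∈ S) :
    {ν | ∃ μ ∈ S, μ ≠ 0 ∧ ν = ‖μ‖⁻¹ • μ} = S ∩ Metric.sphere 0 1 := by
  ext ν
  constructor
  · rintro ⟨μ, hμ, hμ0, rfl⟩
    exact ⟨hS μ hμ _ (inv_nonneg.mpr (norm_nonneg μ)),
      mem_sphere_zero_iff_norm.mpr (NormedSpace.norm_normalize_eq_one_iff.mpr hμ0)⟩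
  · rintro ⟨hν, hν1⟩
    rw [mem_sphere_zero_iff_norm] at hν1
    exact ⟨ν, hν, norm_ne_zero_iff.mp (by simp [hν1]), by simp [hν1]⟩

end Normalize

/-- For an indecomposable generalized Cartan matrix of type (IND), the set
`{z_μ : μ ∈ Q^{++}_ℝ, μ ≠ 0}` is the closure of `{z_α : α ∈ Δ^{im,+}}` in `V`. -/
theorem stmt10 (B : π → π → ℤ)
    (hdiag : ∀ α, B α α = 2)
    (hoff : ∀ α β, α ≠ β → B α β ≤ 0)
    (hzero : ∀ α β, B α β = 0 ↔ B β α = 0)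
    (hindec : ∀ a b : π, Relation.ReflTransGen (fun x y => x ≠ y ∧ B x y ≠ 0) a b)
    (hIND : ∃ u : π → ℝ, (∀ α, 0 < u α) ∧ ∀ α, (∑ β, (B α β : ℝ) * u β) < 0) :
    {ν | ∃ μ ∈ gcmQpp B, μ ≠ 0 ∧ ν = ‖μ‖⁻¹ • μ} =
      closure {ν | ∃ α ∈ gcmImPlus B, ν = ‖α‖⁻¹ • α} := by
  have hZ : {ν | ∃ α ∈ gcmImPlus B, ν = ‖α‖⁻¹ • α} = NormedSpace.normalize '' gcmImPlus B :=
    Set.ext fun ν => ⟨fun ⟨α, hα, h⟩ => ⟨α, hα, h.symm⟩, fun ⟨α, hα, h⟩ => ⟨α, hα, h.symm⟩⟩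
  rw [hZ, setOf_normalize_eq_inter_sphere fun v hv c hc => smul_mem_gcmQpp hv hc]
  refine subset_antisymm ?_ (closure_minimal ?_ (isClosed_gcmQpp.inter Metric.isClosed_sphere))
  · rintro ν ⟨hν, hν1⟩
    rw [mem_sphere_zero_iff_norm] at hν1
    have hν0 : ν ≠ 0 := norm_ne_zero_iff.mp (by simp [hν1])
    obtain ⟨k, -⟩ : ∃ k, ν k ≠ 0 := by
      by_contra! h
      exact hν0 (PiLp.ext h)
    have : Nonempty π := ⟨k⟩
    rw [← NormedSpace.normalize_eq_self_of_norm_eq_one hν1]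
    exact normalize_mem_closure_image hν0
      (gcmQpp_subset_closure hdiag hoff hzero hindec hIND hν)
  · rintro _ ⟨α, hα, rfl⟩
    exact ⟨smul_mem_gcmQpp (gcmImPlus_subset_gcmQpp hdiag hoff hzero hα) (by positivity),
      mem_sphere_zero_iff_norm.mpr (NormedSpace.norm_normalize_eq_one_iff.mpr
        (ne_of_mem_of_not_mem hα zero_notMem_gcmImPlus))⟩

end
end KMS10
end
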